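/- arXiv:0810.2846 — 5 statements merged into one kernel-verified Lean document; each statement's English description precedes it below -/
import Mathlib

section
/- Let K be a positive integer, n > 0 and α real numbers with n + α > 0, let g₁,…,g_K : ℝ → ℝ and m₁,…,m_K be real numbers. Suppose z : ℝ → ℝ is differentiable on an open interval I, with z(x) > 0 and z'(x) > 0 for all x ∈ I, and z satisfies (z'(x))^n = Σ_{k=1}^K g_k(x)·z(x)^{m_k} for all x ∈ I (real powers). Define w(x) = z(x)^{(n+α)/n}. Then w is differentiable on I with w'(x) > 0, and w satisfies (w'(x))^n = Σ_{k=1}^K ((n+α)/n)^n · g_k(x) · w(x)^{n(m_k+α)/(n+α)} for all x ∈ I. -/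
/-! With `c = (n + α) / n`, the chain rule gives `w' = z' c z^(c-1)`, so
`(w')^n = c^n z^α (z')^n`; the factor `z^α` shifts each `z^(m_k)` to
`z^(m_k + α) = w^((m_k + α) / c)`. -/

open Finset Real

lemma mul_mul_rpow_sub_one_rpow {u c z p : ℝ} (hu : 0 ≤ u) (hc : 0 ≤ c) (hz : 0 < z) :
    (u * c * z ^ (c - 1)) ^ p = u ^ p * c ^ p * z ^ ((c - 1) * p) := by
  rw [mul_rpow (by positivity) (by positivity), mul_rpow hu hc, ← rpow_mul hz.le]

lemma rpow_mul_sum_mul_rpow {ι : Type*} (s : Finset ι) (g m : ι → ℝ) {z : ℝ} (hz : 0 < z)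
    {c : ℝ} (hc : c ≠ 0) (α : ℝ) :
    z ^ α * ∑ k ∈ s, g k * z ^ m k = ∑ k ∈ s, g k * (z ^ c) ^ ((m k + α) / c) := by
  rw [mul_sum]
  refine sum_congr rfl fun k _ => ?_
  rw [← rpow_mul hz.le, mul_div_cancel₀ _ hc, rpow_add hz]
  ring

theorem abel_transformation_general (K : ℕ) (n α : ℝ) (hn : 0 < n) (hna : 0 < n + α)
    (g : Fin K → ℝ → ℝ) (m : Fin K → ℝ) (a b : ℝ)
    (z z' : ℝ → ℝ)
    (hz : ∀ x ∈ Set.Ioo a b, HasDerivAt z (z' x) x)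
    (hzpos : ∀ x ∈ Set.Ioo a b, 0 < z x)
    (hz'pos : ∀ x ∈ Set.Ioo a b, 0 < z' x)
    (hode : ∀ x ∈ Set.Ioo a b, (z' x) ^ n = ∑ k, g k x * z x ^ (m k))
    (w : ℝ → ℝ) (hw : w = fun x => z x ^ ((n + α) / n)) :
    ∀ x ∈ Set.Ioo a b, ∃ w' : ℝ, HasDerivAt w w' x ∧ 0 < w' ∧
      w' ^ n = ∑ k, ((n + α) / n) ^ n * g k x * w x ^ (n * (m k + α) / (n + α)) := by
  intro x hx
  set c := (n + α) / n
  have hc : 0 < c := div_pos hna hn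
  have hzx := hzpos x hx
  have hz'x := hz'pos x hx
  have hα : (c - 1) * n = α := by rw [sub_mul, div_mul_cancel₀ _ hn.ne']; ring
  have hexp : ∀ k, n * (m k + α) / (n + α) = (m k + α) / c :=
    fun k => by rw [div_div_eq_mul_div, mul_comm]
  subst hw
  refine ⟨z' x * c * z x ^ (c - 1), (hz x hx).rpow_const (Or.inl hzx.ne'),
    by positivity, ?_⟩
  rw [mul_mul_rpow_sub_one_rpow hz'x.le hc.le hzx, hα, hode x hx, mul_assoc,
    mul_comm, mul_assoc, rpow_mul_sum_mul_rpow _ _ _ hzx hc.ne', mul_sum]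
  simp only [hexp, mul_assoc]

/-- If `z` solves the generalized Abel ODE `(z')^n = ∑ g_k z^{m_k}` on an open
interval, with `z > 0` and `z' > 0`, then `w = z^{(n+α)/n}` is differentiable with positive
derivative and solves `(w')^n = ∑ ((n+α)/n)^n g_k w^{n(m_k+α)/(n+α)}`. -/
theorem abel_transformation (K : ℕ) (hK : 0 < K) (n α : ℝ) (hn : 0 < n) (hna : 0 < n + α)
    (g : Fin K → ℝ → ℝ) (m : Fin K → ℝ) (a b : ℝ)
    (z z' : ℝ → ℝ)
    (hz : ∀ x ∈ Set.Ioo a b, HasDerivAt z (z' x) x)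
    (hzpos : ∀ x ∈ Set.Ioo a b, 0 < z x)
    (hz'pos : ∀ x ∈ Set.Ioo a b, 0 < z' x)
    (hode : ∀ x ∈ Set.Ioo a b, (z' x) ^ n = ∑ k, g k x * z x ^ (m k))
    (w : ℝ → ℝ) (hw : w = fun x => z x ^ ((n + α) / n)) :
    ∀ x ∈ Set.Ioo a b, ∃ w' : ℝ, HasDerivAt w w' x ∧ 0 < w' ∧
      w' ^ n = ∑ k, ((n + α) / n) ^ n * g k x * w x ^ (n * (m k + α) / (n + α)) :=
  abel_transformation_general K n α hn hna g m a b z z' hz hzpos hz'pos hode w hw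
end

section
/- Let K be a positive integer, g₁,…,g_K : ℝ → ℝ functions, m₁,…,m_K real numbers, and fix an index k with m_k ≠ 0. Suppose z : ℝ → ℝ is differentiable on an open interval I with z(x) > 0 for all x ∈ I, and z satisfies z'(x) = Σ_{j=1}^K g_j(x)·z(x)^{m_j} for all x ∈ I (real powers). Then w(x) = z(x)^{m_k} is differentiable on I and satisfies w'(x) = Σ_{j=1}^K m_k·g_j(x)·w(x)^{(m_j + m_k − 1)/m_k} for all x ∈ I. -/
/-- If `z > 0` solves the first-order Abel ODE `z' = ∑ g_j z^{m_j}` on an open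
interval and `m k ≠ 0` for a fixed index `k`, then `w = z^{m_k}` is differentiable and solves
`w' = ∑ m_k g_j w^{(m_j + m_k - 1)/m_k}`. -/
theorem abel_power_solution (K : ℕ) (hK : 0 < K)
    (g : Fin K → ℝ → ℝ) (m : Fin K → ℝ) (k : Fin K) (hmk : m k ≠ 0) (a b : ℝ)
    (z z' : ℝ → ℝ)
    (hz : ∀ x ∈ Set.Ioo a b, HasDerivAt z (z' x) x)
    (hzpos : ∀ x ∈ Set.Ioo a b, 0 < z x)
    (hode : ∀ x ∈ Set.Ioo a b, z' x = ∑ j, g j x * z x ^ (m j))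
    (w : ℝ → ℝ) (hw : w = fun x => z x ^ (m k)) :
    ∀ x ∈ Set.Ioo a b, ∃ w' : ℝ, HasDerivAt w w' x ∧
      w' = ∑ j, m k * g j x * w x ^ ((m j + m k - 1) / m k) := by
  intro x hx
  have hzx := hzpos x hx
  have hd : HasDerivAt w (z' x * m k * z x ^ (m k - 1)) x := by
    rw [hw]
    exact (hz x hx).rpow_const (Or.inl hzx.ne')
  refine ⟨_, hd, ?_⟩
  rw [hode x hx, Finset.sum_mul, Finset.sum_mul]
  apply Finset.sum_congr rfl
  intro j _
  have hwx : w x ^ ((m j + m k - 1) / m k) = z x ^ (m j + m k - 1) := by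
    rw [hw]
    simp only
    rw [← Real.rpow_mul hzx.le]
    congr 1
    field_simp
  rw [hwx, show m j + m k - 1 = m j + (m k - 1) by ring, Real.rpow_add hzx]
  ring
end

section
/- Let K be a positive integer, n > 0 and α real numbers with n + α > 0. For u, m : Fin K → ℝ define ū(k) = ((n+α)/n)^n · u(k) and m̄(k) = n·(m(k)+α)/(n+α). Let F : (Fin K → ℝ) → (Fin K → ℝ) → ℝ be everywhere positive, and suppose that for each index k and all u, m the map t ↦ F(update(u,k,t), m) is differentiable (where update(u,k,t) replaces the k-th entry of u by t), and that F satisfies log F(u, m) = (n/(n+α)) · log F(ū, m̄) for all u, m. Then for every index k and all u, m: (∂F/∂u_k)(u, m) / F(u, m) = ((n+α)/n)^{n−1} · (∂F/∂u_k)(ū, m̄) / F(ū, m̄), where (∂F/∂u_k)(u,m) denotes the derivative of t ↦ F(update(u,k,t), m) at t = u(k). -/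
/-! Differentiating `log F(u, m) = (n/(n+α)) · log F(ū, m̄)` in `u_k` turns it into a relation between
logarithmic derivatives: by the chain rule the scaling `ū = c · u`, `c = ((n+α)/n)^n`, contributes the
factor `c`, and `c · n/(n+α) = ((n+α)/n)^(n-1)`. -/

open Real

theorem logDeriv_eq_of_log_eq_const_mul_log_comp_mul {f g : ℝ → ℝ} {a c x : ℝ}
    (hf : DifferentiableAt ℝ f x) (hg : DifferentiableAt ℝ g (c * x))
    (hfx : f x ≠ 0) (hgx : g (c * x) ≠ 0) (h : ∀ t, log (f t) = a * log (g (c * t))) :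
    logDeriv f x = a * c * logDeriv g (c * x) := by
  have hlog : log ∘ f = fun t => a * (log ∘ g) (c * t) := funext h
  have hlogg : DifferentiableAt ℝ (fun t => (log ∘ g) (c * t)) x :=
    (hg.log hgx).comp x (differentiableAt_id.const_mul c)
  rw [← deriv_log_comp_eq_logDeriv hf hfx, ← deriv_log_comp_eq_logDeriv hg hgx, hlog,
    deriv_const_mul a hlogg, deriv_comp_mul_left, smul_eq_mul, mul_assoc]

theorem update_const_mul {ι R : Type*} [DecidableEq ι] [Mul R] (u : ι → R) (k : ι) (c t : R) :
    (fun j => c * Function.update u k t j) = Function.update (fun j => c * u j) k (c * t) :=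
  funext (Function.apply_update (fun _ s => c * s) u k t)

theorem div_rpow_sub_one {a b : ℝ} (ha : a ≠ 0) (hb : b ≠ 0) (y : ℝ) :
    (b / a) ^ (y - 1) = (b / a) ^ y * (a / b) := by
  rw [rpow_sub_one (div_ne_zero hb ha), div_eq_mul_inv, inv_div]

theorem lambda_linear_functional_equation_general (K : ℕ)
    (n α : ℝ) (hn : 0 < n) (hna : 0 < n + α)
    (F : (Fin K → ℝ) → (Fin K → ℝ) → ℝ)
    (hFpos : ∀ u m : Fin K → ℝ, 0 < F u m)
    (hdiff : ∀ (k : Fin K) (u m : Fin K → ℝ),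
      Differentiable ℝ (fun t => F (Function.update u k t) m))
    (hF : ∀ u m : Fin K → ℝ,
      Real.log (F u m) = (n / (n + α)) *
        Real.log (F (fun k => ((n + α) / n) ^ n * u k)
          (fun k => n * (m k + α) / (n + α)))) :
    ∀ (k : Fin K) (u m : Fin K → ℝ),
      deriv (fun t => F (Function.update u k t) m) (u k) / F u m
        = ((n + α) / n) ^ (n - 1) *
          (deriv (fun t => F (Function.update (fun j => ((n + α) / n) ^ n * u j) k t)
              (fun j => n * (m j + α) / (n + α))) (((n + α) / n) ^ n * u k)
            / F (fun j => ((n + α) / n) ^ n * u j) (fun j => n * (m j + α) / (n + α))) := by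
  intro k u m
  rw [div_rpow_sub_one hn.ne' hna.ne']
  set c := ((n + α) / n) ^ n
  set ub : Fin K → ℝ := fun j => c * u j
  set mb : Fin K → ℝ := fun j => n * (m j + α) / (n + α)
  have hlog : ∀ t, log (F (Function.update u k t) m)
      = n / (n + α) * log (F (Function.update ub k (c * t)) mb) := fun t => by
    rw [hF, update_const_mul]
  have key := logDeriv_eq_of_log_eq_const_mul_log_comp_mul (hdiff k u m (u k))
    (hdiff k ub mb (c * u k)) (hFpos _ _).ne' (hFpos _ _).ne' hlog
  have hub : Function.update ub k (c * u k) = ub := Function.update_eq_self k ub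
  simp only [logDeriv_apply, Function.update_eq_self, hub] at key
  rw [key]
  ring

/-- If a positive function `F` satisfies
`log F(u, m) = (n/(n+α)) · log F(ū, m̄)` and its partial maps in each `u`-slot are
differentiable, then the logarithmic partial derivative `Λ_{u,k} = F_{u,k}/F` satisfies the
linear functional equation `Λ_{u,k}(u, m) = ((n+α)/n)^{n-1} · Λ_{u,k}(ū, m̄)`. -/
theorem lambda_linear_functional_equation (K : ℕ) (hK : 0 < K)
    (n α : ℝ) (hn : 0 < n) (hna : 0 < n + α)
    (F : (Fin K → ℝ) → (Fin K → ℝ) → ℝ)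
    (hFpos : ∀ u m : Fin K → ℝ, 0 < F u m)
    (hdiff : ∀ (k : Fin K) (u m : Fin K → ℝ),
      Differentiable ℝ (fun t => F (Function.update u k t) m))
    (hF : ∀ u m : Fin K → ℝ,
      Real.log (F u m) = (n / (n + α)) *
        Real.log (F (fun k => ((n + α) / n) ^ n * u k)
          (fun k => n * (m k + α) / (n + α)))) :
    ∀ (k : Fin K) (u m : Fin K → ℝ),
      deriv (fun t => F (Function.update u k t) m) (u k) / F u m
        = ((n + α) / n) ^ (n - 1) *
          (deriv (fun t => F (Function.update (fun j => ((n + α) / n) ^ n * u j) k t)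
              (fun j => n * (m j + α) / (n + α))) (((n + α) / n) ^ n * u k)
            / F (fun j => ((n + α) / n) ^ n * u j) (fun j => n * (m j + α) / (n + α))) :=
  lambda_linear_functional_equation_general K n α hn hna F hFpos hdiff hF
end

section
/- Let K be a positive integer, n > 0 and α real numbers with n + α > 0. For u, m : Fin K → ℝ define ū(k) = ((n+α)/n)^n · u(k) and m̄(k) = n·(m(k)+α)/(n+α). Let F : (Fin K → ℝ) → (Fin K → ℝ) → ℝ be everywhere positive, and suppose that for each index k and all u, m the map t ↦ F(u, update(m,k,t)) is differentiable (where update(m,k,t) replaces the k-th entry of m by t), and that F satisfies log F(u, m) = (n/(n+α)) · log F(ū, m̄) for all u, m. Then for every index k and all u, m: (∂F/∂m_k)(u, m) / F(u, m) = (n/(n+α))^2 · (∂F/∂m_k)(ū, m̄) / F(ū, m̄), where (∂F/∂m_k)(u,m) denotes the derivative of t ↦ F(u, update(m,k,t)) at t = m(k). -/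
/-- If a positive function `F` satisfies
`log F(u, m) = (n/(n+α)) · log F(ū, m̄)` and its partial maps in each `m`-slot are
differentiable, then the logarithmic partial derivative `Ω_{m,k} = F_{m,k}/F` satisfies the
linear functional equation `Ω_{m,k}(u, m) = (n/(n+α))^2 · Ω_{m,k}(ū, m̄)`. -/
theorem omega_linear_functional_equation (K : ℕ) (hK : 0 < K)
    (n α : ℝ) (hn : 0 < n) (hna : 0 < n + α)
    (F : (Fin K → ℝ) → (Fin K → ℝ) → ℝ)
    (hFpos : ∀ u m : Fin K → ℝ, 0 < F u m)
    (hdiff : ∀ (k : Fin K) (u m : Fin K → ℝ),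
      Differentiable ℝ (fun t => F u (Function.update m k t)))
    (hF : ∀ u m : Fin K → ℝ,
      Real.log (F u m) = (n / (n + α)) *
        Real.log (F (fun k => ((n + α) / n) ^ n * u k)
          (fun k => n * (m k + α) / (n + α)))) :
    ∀ (k : Fin K) (u m : Fin K → ℝ),
      deriv (fun t => F u (Function.update m k t)) (m k) / F u m
        = (n / (n + α)) ^ 2 *
          (deriv (fun t => F (fun j => ((n + α) / n) ^ n * u j)
              (Function.update (fun j => n * (m j + α) / (n + α)) k t))
              (n * (m k + α) / (n + α))
            / F (fun j => ((n + α) / n) ^ n * u j) (fun j => n * (m j + α) / (n + α))) := by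
  intro k u m
  set c : ℝ := n / (n + α) with hc
  set ub : Fin K → ℝ := fun j => ((n + α) / n) ^ n * u j with hub
  set mb : Fin K → ℝ := fun j => n * (m j + α) / (n + α) with hmb
  set g : ℝ → ℝ := fun t => F u (Function.update m k t) with hgdef
  set G : ℝ → ℝ := fun t => F ub (Function.update mb k t) with hGdef
  set s : ℝ → ℝ := fun t => n * (t + α) / (n + α) with hsdef
  have hgpos : ∀ t, 0 < g t := fun t => hFpos _ _
  have hGpos : ∀ t, 0 < G t := fun t => hFpos _ _
  -- pointwise functional equation along the slot
  have key : ∀ t : ℝ, Real.log (g t) = c * Real.log (G (s t)) := by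
    intro t
    have := hF u (Function.update m k t)
    have harg : (fun j => n * ((Function.update m k t) j + α) / (n + α))
        = Function.update mb k (s t) := by
      funext j
      by_cases h : j = k
      · subst h; simp [Function.update, hmb, hsdef]
      · simp [Function.update, h, hmb]
    rw [harg] at this
    exact this
  -- derivative facts
  have hsd : HasDerivAt s c (m k) := by
    have : HasDerivAt (fun t : ℝ => n * (t + α) / (n + α)) (n * 1 / (n + α)) (m k) :=
      (((hasDerivAt_id (m k)).add_const α).const_mul n).div_const (n + α)
    simpa [hc] using this
  have hg : HasDerivAt g (deriv g (m k)) (m k) :=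
    ((hdiff k u m) (m k)).hasDerivAt
  have hG : HasDerivAt G (deriv G (s (m k))) (s (m k)) :=
    ((hdiff k ub mb) (s (m k))).hasDerivAt
  have hL : HasDerivAt (fun t => Real.log (g t)) (deriv g (m k) / g (m k)) (m k) :=
    hg.log (hgpos (m k)).ne'
  have hR : HasDerivAt (fun t => c * Real.log (G (s t)))
      (c * (deriv G (s (m k)) / G (s (m k)) * c)) (m k) := by
    have h1 : HasDerivAt (fun t => Real.log (G (s t)))
        (deriv G (s (m k)) / G (s (m k)) * c) (m k) :=
      (hG.log (hGpos (s (m k))).ne').comp (m k) hsd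
    simpa using h1.const_mul c
  have heq : (fun t => Real.log (g t)) = fun t => c * Real.log (G (s t)) := funext key
  rw [heq] at hL
  have hder : deriv g (m k) / g (m k) = c * (deriv G (s (m k)) / G (s (m k)) * c) :=
    hL.unique hR
  have : deriv g (m k) / g (m k) = c ^ 2 * (deriv G (s (m k)) / G (s (m k))) := by
    rw [hder]; ring
  simpa [hgdef, hGdef, hsdef, hmb, hub, hc] using this
end

section
/- Let v : ℝ → ℝ be continuous, let n be a real number with n ≠ 1, and let C be a real constant. Define z(x) = ((1−n)·∫₀ˣ v(t) dt + C)^{1/(1−n)} (real power). Then at every point x of an open interval on which (1−n)·∫₀ˣ v(t) dt + C > 0, z is differentiable and satisfies z'(x) = v(x)·z(x)^n. -/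
theorem HasDerivAt.rpow_one_div_one_sub {w : ℝ → ℝ} {f' x n : ℝ}
    (hw : HasDerivAt w ((1 - n) * f') x) (hwx : 0 < w x) (hn : n ≠ 1) :
    HasDerivAt (fun y => w y ^ (1 / (1 - n))) (f' * (w x ^ (1 / (1 - n))) ^ n) x := by
  have h1n : (1 : ℝ) - n ≠ 0 := sub_ne_zero.mpr hn.symm
  have hexp : 1 / (1 - n) * n = 1 / (1 - n) - 1 := by field_simp; ring
  convert hw.rpow_const (p := 1 / (1 - n)) (Or.inl hwx.ne') using 1
  rw [← Real.rpow_mul hwx.le, hexp]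
  field_simp

theorem hasDerivAt_affine_primitive {v : ℝ → ℝ} (hv : Continuous v) (k C x : ℝ) :
    HasDerivAt (fun y => k * (∫ t in (0:ℝ)..y, v t) + C) (k * v x) x :=
  ((hv.integral_hasStrictDerivAt 0 x).hasDerivAt.const_mul k).add_const C

/-- The formula `z(x) = ((1-n)·∫₀ˣ v + C)^{1/(1-n)}` solves the separable
one-term Abel equation `z' = v(x)·z^n` on any open interval on which
`(1-n)·∫₀ˣ v + C > 0`. -/
theorem one_term_abel_solution (v : ℝ → ℝ) (hv : Continuous v)
    (n : ℝ) (hn : n ≠ 1) (C : ℝ)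
    (z : ℝ → ℝ)
    (hz : z = fun x => ((1 - n) * (∫ t in (0:ℝ)..x, v t) + C) ^ (1 / (1 - n)))
    (a b : ℝ)
    (hpos : ∀ x ∈ Set.Ioo a b, 0 < (1 - n) * (∫ t in (0:ℝ)..x, v t) + C) :
    ∀ x ∈ Set.Ioo a b, HasDerivAt z (v x * z x ^ n) x := by
  intro x hx
  subst hz
  exact (hasDerivAt_affine_primitive hv (1 - n) C x).rpow_one_div_one_sub (hpos x hx) hn
end
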